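/- arXiv:2504.15547 — 3 statements merged into one kernel-verified Lean document; each statement's English description precedes it below -/
import Mathlib

section
/- For all real numbers p in [0,1] and all positive integers h, the quantity g(h,p) := p·exp(-0.1·h·p^(1/h)) satisfies g(h,p) ≤ exp(-0.1·h). -/
open Real

/- Writing `q = p ^ (1 / t)`, so that `log p = t * log q`, the bound `log q ≤ q - 1 ≤ c * (q - 1)`
(valid for `q ≤ 1` and `c ≤ 1`) gives `log p ≤ c * t * (q - 1)`; exponentiating yields
`p * exp (-c * t * q) ≤ exp (-c * t)`. -/

theorem log_le_mul_mul_rpow_one_div_sub_one {c p t : ℝ} (hc : c ≤ 1) (hp0 : 0 < p) (hp1 : p ≤ 1)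
    (ht : 0 ≤ t) : log p ≤ c * t * (p ^ (1 / t) - 1) := by
  rcases ht.eq_or_lt with rfl | ht
  · simpa using log_nonpos hp0.le hp1
  set q := p ^ (1 / t)
  have hq0 : 0 < q := rpow_pos_of_pos hp0 _
  have hq1 : q ≤ 1 := rpow_le_one hp0.le hp1 (by positivity)
  have hlog : log p = t * log q := by
    rw [log_rpow hp0]
    field_simp
  have hlog_q : log q ≤ c * (q - 1) := by
    nlinarith [log_le_sub_one_of_pos hq0]
  calc log p = t * log q := hlog
    _ ≤ t * (c * (q - 1)) := mul_le_mul_of_nonneg_left hlog_q ht.le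
    _ = c * t * (q - 1) := by ring

theorem mul_exp_neg_mul_mul_rpow_one_div_le {c p t : ℝ} (hc : c ≤ 1) (hp0 : 0 ≤ p) (hp1 : p ≤ 1)
    (ht : 0 ≤ t) : p * exp (-c * t * p ^ (1 / t)) ≤ exp (-c * t) := by
  rcases hp0.eq_or_lt with rfl | hp0
  · simpa using exp_nonneg _
  have hlog := log_le_mul_mul_rpow_one_div_sub_one hc hp0 hp1 ht
  calc p * exp (-c * t * p ^ (1 / t)) = exp (log p + -c * t * p ^ (1 / t)) := by
        rw [exp_add, exp_log hp0]
    _ ≤ exp (-c * t) := exp_le_exp.mpr (by linarith)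

theorem stmt_0_general (p : ℝ) (hp0 : 0 ≤ p) (hp1 : p ≤ 1) (h : ℕ) :
    p * Real.exp (-0.1 * h * p ^ ((1 : ℝ) / h)) ≤ Real.exp (-0.1 * h) :=
  mul_exp_neg_mul_mul_rpow_one_div_le (by norm_num) hp0 hp1 h.cast_nonneg

theorem stmt_0 (p : ℝ) (hp0 : 0 ≤ p) (hp1 : p ≤ 1) (h : ℕ) (hh : 0 < h) :
    p * Real.exp (-0.1 * h * p ^ ((1 : ℝ) / h)) ≤ Real.exp (-0.1 * h) :=
  stmt_0_general p hp0 hp1 h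
end

section
/- For every integer h ≥ 1 and every real p ∈ (0,1], the function g satisfies g(h-1,p) ≤ 1.2·g(h,p), where g(h,p) = p·exp(-0.1·h·p^(1/h)) for h ≥ 1 and g(0,p) = p. -/
/-
The exponent `h * p ^ (1 / h)` grows by at most `1` from `h - 1` to `h`: by weighted AM-GM,
`p ^ (1 / h) = (p ^ (1 / (h - 1))) ^ ((h - 1) / h) * 1 ^ (1 / h)` is at most the corresponding
arithmetic mean. Hence `g (h - 1) p ≤ exp 0.1 * g h p`, and `exp 0.1 ≤ 1 / 0.9 ≤ 1.2`.
-/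

noncomputable def g (h : ℕ) (p : ℝ) : ℝ :=
  if h = 0 then p else p * Real.exp (-0.1 * h * p ^ ((1 : ℝ) / h))

open Real

lemma Real.exp_one_tenth_le : exp 0.1 ≤ 1.2 :=
  calc exp 0.1 ≤ 1 / (1 - 0.1) := exp_bound_div_one_sub_of_interval (by norm_num) (by norm_num)
    _ ≤ 1.2 := by norm_num

/-- The formula `p * exp (-0.1 * h * p ^ (1 / h))` also gives `g 0 p = p`, since its exponent
vanishes at `h = 0`. -/
lemma g_eq (h : ℕ) (p : ℝ) : g h p = p * exp (-0.1 * h * p ^ ((1 : ℝ) / h)) := by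
  rcases eq_or_ne h 0 with rfl | hh
  · simp [g]
  · simp [g, hh]

lemma add_one_mul_rpow_one_div_le {m p : ℝ} (hm : 0 < m) (hp : 0 ≤ p) :
    (m + 1) * p ^ (1 / (m + 1)) ≤ m * p ^ (1 / m) + 1 := by
  have hm1 : 0 < m + 1 := by linarith
  have amgm := geom_mean_le_arith_mean2_weighted (w₁ := m / (m + 1)) (w₂ := 1 / (m + 1))
    (p₁ := p ^ (1 / m)) (p₂ := 1) (by positivity) (by positivity) (by positivity) zero_le_one
    (by field_simp)
  have hpow : (p ^ (1 / m)) ^ (m / (m + 1)) = p ^ (1 / (m + 1)) := by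
    rw [← rpow_mul hp]
    congr 1
    field_simp
  rw [hpow, one_rpow, mul_one, mul_one] at amgm
  calc (m + 1) * p ^ (1 / (m + 1)) ≤ (m + 1) * (m / (m + 1) * p ^ (1 / m) + 1 / (m + 1)) :=
        mul_le_mul_of_nonneg_left amgm hm1.le
    _ = m * p ^ (1 / m) + 1 := by field_simp

lemma natCast_add_one_mul_rpow_one_div_le (m : ℕ) {p : ℝ} (hp0 : 0 ≤ p) (hp1 : p ≤ 1) :
    ((m + 1 : ℕ) : ℝ) * p ^ ((1 : ℝ) / (m + 1 : ℕ)) ≤ m * p ^ ((1 : ℝ) / m) + 1 := by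
  push_cast
  rcases Nat.eq_zero_or_pos m with rfl | hm
  · simpa using hp1
  · exact add_one_mul_rpow_one_div_le (by exact_mod_cast hm) hp0

theorem stmt_5 (h : ℕ) (hh : 1 ≤ h) (p : ℝ) (hp0 : 0 < p) (hp1 : p ≤ 1) :
    g (h - 1) p ≤ 1.2 * g h p := by
  obtain ⟨m, rfl⟩ : ∃ m, h = m + 1 := ⟨h - 1, by omega⟩
  have hexponent := natCast_add_one_mul_rpow_one_div_le m hp0.le hp1
  rw [Nat.add_sub_cancel, g_eq, g_eq]
  calc p * exp (-0.1 * m * p ^ ((1 : ℝ) / m))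
      ≤ p * exp (0.1 + -0.1 * (m + 1 : ℕ) * p ^ ((1 : ℝ) / (m + 1 : ℕ))) := by
        gcongr
        linarith
    _ = exp 0.1 * (p * exp (-0.1 * (m + 1 : ℕ) * p ^ ((1 : ℝ) / (m + 1 : ℕ)))) := by
        rw [exp_add]
        ring
    _ ≤ 1.2 * (p * exp (-0.1 * (m + 1 : ℕ) * p ^ ((1 : ℝ) / (m + 1 : ℕ)))) := by
        gcongr
        exact exp_one_tenth_le
end

section
/- For every integer h ≥ 2 and all reals p ∈ (0,1], r ∈ (0,p], one has (h-1)·p^(1/(h-1)) + e²·(r/p) ≥ (h+2)·r^(1/h). -/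
/-!
Young's inequality with weights `h - 1` and `1`, applied to `p` and `e² r / p`, bounds the right-hand
side below by `h (e² r)^(1/h) = h e^(2/h) r^(1/h)`, and `h + 2 ≤ h e^(2/h)` since `1 + x ≤ eˣ`.
-/

open Real

theorem young_inequality_weighted {u v a b : ℝ} (hu : 0 < u) (hv : 0 < v) (ha : 0 ≤ a) (hb : 0 ≤ b) :
    (u + v) * (a * b) ^ (1 / (u + v)) ≤ u * a ^ (1 / u) + v * b ^ (1 / v) := by
  have amgm := geom_mean_le_arith_mean2_weighted (w₁ := u / (u + v)) (w₂ := v / (u + v))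
    (p₁ := a ^ (1 / u)) (p₂ := b ^ (1 / v)) (by positivity) (by positivity) (by positivity)
    (by positivity) (by field_simp)
  have hpow : ∀ {w c : ℝ}, 0 < w → 0 ≤ c → (c ^ (1 / w)) ^ (w / (u + v)) = c ^ (1 / (u + v)) :=
    fun hw hc ↦ by rw [← rpow_mul hc]; congr 1; field_simp
  rw [hpow hu ha, hpow hv hb, ← mul_rpow ha hb] at amgm
  calc (u + v) * (a * b) ^ (1 / (u + v))
      ≤ (u + v) * (u / (u + v) * a ^ (1 / u) + v / (u + v) * b ^ (1 / v)) := by gcongr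
    _ = u * a ^ (1 / u) + v * b ^ (1 / v) := by field_simp

theorem add_le_mul_exp_div {x : ℝ} (hx : 0 < x) (c : ℝ) : x + c ≤ x * exp (c / x) :=
  calc x + c = x * (c / x + 1) := by field_simp; ring
    _ ≤ x * exp (c / x) := by gcongr; exact add_one_le_exp _

theorem stmt_9_general (h : ℕ) (hh : 2 ≤ h) (p r : ℝ) (hp0 : 0 < p)
    (hr0 : 0 < r) :
    ((h : ℝ) + 2) * r ^ ((1 : ℝ) / h) ≤
      ((h : ℝ) - 1) * p ^ (1 / ((h : ℝ) - 1)) + Real.exp 2 * (r / p) := by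
  have hh1 : (0 : ℝ) < h - 1 := by
    have : (2 : ℝ) ≤ h := by exact_mod_cast hh
    linarith
  have young := young_inequality_weighted hh1 one_pos hp0.le (by positivity : 0 ≤ exp 2 * (r / p))
  have hprod : p * (exp 2 * (r / p)) = exp 2 * r := by field_simp
  rw [sub_add_cancel, div_one, rpow_one, hprod, mul_rpow (exp_pos 2).le hr0.le, ← exp_mul,
    mul_one_div, one_mul] at young
  calc ((h : ℝ) + 2) * r ^ ((1 : ℝ) / h)
      ≤ h * exp (2 / h) * r ^ ((1 : ℝ) / h) := by
        gcongr; exact add_le_mul_exp_div (by positivity) 2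
    _ ≤ ((h : ℝ) - 1) * p ^ (1 / ((h : ℝ) - 1)) + exp 2 * (r / p) := by
        rw [mul_assoc]; exact young

theorem stmt_9 (h : ℕ) (hh : 2 ≤ h) (p r : ℝ) (hp0 : 0 < p) (hp1 : p ≤ 1)
    (hr0 : 0 < r) (hrp : r ≤ p) :
    ((h : ℝ) + 2) * r ^ ((1 : ℝ) / h) ≤
      ((h : ℝ) - 1) * p ^ (1 / ((h : ℝ) - 1)) + Real.exp 2 * (r / p) :=
  stmt_9_general h hh p r hp0 hr0
end
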